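/- For the Hom-entwining structure associated to a Hom-Doi-Koppinen datum [(A,α),(B,β),(C,γ)] with ψ(c⊗a)=α(a_(0))⊗γ^{-1}(c)a_(1), a right (A,α)-Hom-module and right (C,γ)-Hom-comodule (M,μ) is an entwined Hom-module (i.e., ρ^M(ma)=m_(0)α^{-1}(a)_κ⊗γ(m_(1)^κ)) if and only if ρ^M(ma)=m_(0)a_(0)⊗m_(1)a_(1) for all m∈M, a∈A. -/
import Mathlib


open TensorProduct

namespace HomPaper

variable {k : Type*} [CommRing k]
variable {A C V : Type*}
variable [AddCommGroup A] [Module k A] [AddCommGroup C] [Module k C]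
variable [AddCommGroup V] [Module k V]

/-- Monoidal Hom-algebra axioms. -/
def IsHomAlgebra (α : A ≃ₗ[k] A) (mul : A →ₗ[k] A →ₗ[k] A) (one : A) : Prop :=
  (∀ a b c, mul (α a) (mul b c) = mul (mul a b) (α c)) ∧
  (∀ a, mul a one = α a) ∧ (∀ a, mul one a = α a) ∧
  (∀ a b, α (mul a b) = mul (α a) (α b)) ∧ α one = one

/-- Monoidal Hom-coalgebra axioms. -/
def IsHomCoalgebra (γ : C ≃ₗ[k] C) (Δ : C →ₗ[k] C ⊗[k] C) (ε : C →ₗ[k] k) : Prop :=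
  (∀ c, TensorProduct.map γ.symm.toLinearMap Δ (Δ c)
      = TensorProduct.assoc k C C C (TensorProduct.map Δ γ.symm.toLinearMap (Δ c))) ∧
  (∀ c, TensorProduct.lid k C (TensorProduct.map ε LinearMap.id (Δ c)) = γ.symm c) ∧
  (∀ c, TensorProduct.rid k C (TensorProduct.map LinearMap.id ε (Δ c)) = γ.symm c) ∧
  (∀ c, Δ (γ c) = TensorProduct.map γ.toLinearMap γ.toLinearMap (Δ c)) ∧
  (∀ c, ε (γ c) = ε c)

/-- Hom-entwining structure axioms for ψ : C ⊗ A → A ⊗ C, ψ(c⊗a) = a_κ ⊗ c^κ. -/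
def IsHomEntwining (α : A ≃ₗ[k] A) (γ : C ≃ₗ[k] C) (mul : A →ₗ[k] A →ₗ[k] A) (one : A)
    (Δ : C →ₗ[k] C ⊗[k] C) (ε : C →ₗ[k] k) (ψ : C ⊗[k] A →ₗ[k] A ⊗[k] C) : Prop :=
  -- (aa')_κ ⊗ γ(c)^κ = a_κ a'_λ ⊗ γ(c^{κλ})
  (∀ c a a', ψ (γ c ⊗ₜ mul a a')
      = TensorProduct.map (TensorProduct.lift mul) γ.toLinearMap
          ((TensorProduct.assoc k A A C).symm
            (TensorProduct.map LinearMap.id ψ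
              (TensorProduct.assoc k A C A (ψ (c ⊗ₜ a) ⊗ₜ a'))))) ∧
  -- α⁻¹(a_κ) ⊗ c^κ₁ ⊗ c^κ₂ = α⁻¹(a)_{κλ} ⊗ c₁^λ ⊗ c₂^κ
  (∀ c a, TensorProduct.map α.symm.toLinearMap Δ (ψ (c ⊗ₜ a))
      = TensorProduct.assoc k A C C
          (TensorProduct.map ψ LinearMap.id
            ((TensorProduct.assoc k C A C).symm
              (TensorProduct.map LinearMap.id ψ
                (TensorProduct.assoc k C C A (Δ c ⊗ₜ α.symm a)))))) ∧
  -- 1_κ ⊗ c^κ = 1 ⊗ c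
  (∀ c, ψ (c ⊗ₜ one) = one ⊗ₜ c) ∧
  -- a_κ ε(c^κ) = a ε(c)
  (∀ c a, TensorProduct.rid k A (TensorProduct.map LinearMap.id ε (ψ (c ⊗ₜ a))) = ε c • a) ∧
  -- ψ is a morphism in the Hom-category
  (∀ c a, ψ (γ c ⊗ₜ α a) = TensorProduct.map α.toLinearMap γ.toLinearMap (ψ (c ⊗ₜ a)))

/-- The relations defining `V ⊗_A V` (on top of base relations `R₀` defining the coring
module as a quotient of `V`). -/
def corRel (R₀ : Submodule k V) (χ : V ≃ₗ[k] V)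
    (lact : A →ₗ[k] V →ₗ[k] V) (ract : V →ₗ[k] A →ₗ[k] V) : Submodule k (V ⊗[k] V) :=
  Submodule.span k
    ({x | ∃ v a w, x = ract v a ⊗ₜ w - χ v ⊗ₜ lact a (χ.symm w)} ∪
     {x | ∃ r w, r ∈ R₀ ∧ (x = r ⊗ₜ w ∨ x = w ⊗ₜ r)})

/-- Induced left A-action on `V ⊗_A V` (on representatives). -/
noncomputable def lact2 (α : A ≃ₗ[k] A) (χ : V ≃ₗ[k] V) (lact : A →ₗ[k] V →ₗ[k] V) (a : A) :
    V ⊗[k] V →ₗ[k] V ⊗[k] V :=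
  TensorProduct.map (lact (α.symm a)) χ.toLinearMap

/-- Induced right A-action on `V ⊗_A V` (on representatives). -/
noncomputable def ract2 (α : A ≃ₗ[k] A) (χ : V ≃ₗ[k] V) (ract : V →ₗ[k] A →ₗ[k] V) (a : A) :
    V ⊗[k] V →ₗ[k] V ⊗[k] V :=
  TensorProduct.map χ.toLinearMap (ract.flip (α.symm a))

/-- The relations defining `V ⊗_A (V ⊗_A V)`. -/
def corRel3 (R₀ : Submodule k V) (α : A ≃ₗ[k] A) (χ : V ≃ₗ[k] V)
    (lact : A →ₗ[k] V →ₗ[k] V) (ract : V →ₗ[k] A →ₗ[k] V) :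
    Submodule k (V ⊗[k] (V ⊗[k] V)) :=
  Submodule.span k
    ({x | ∃ v a w, x = ract v a ⊗ₜ w - χ v ⊗ₜ lact2 α χ lact a w} ∪
     {x | ∃ v w, w ∈ corRel R₀ χ lact ract ∧ x = v ⊗ₜ w} ∪
     {x | ∃ r w, r ∈ R₀ ∧ x = r ⊗ₜ w})

/-- `(V,χ)` (modulo the relations `R₀`) together with the A-bimodule structure
`lact`, `ract`, comultiplication representative `Δ` and counit `ε` is an
`(A,α)`-Hom-coring: all axioms are stated on representatives, under the quotient
projections by `R₀` resp. the tensor-relation submodules. -/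
def IsHomCoring (α : A ≃ₗ[k] A) (mul : A →ₗ[k] A →ₗ[k] A) (one : A)
    (χ : V ≃ₗ[k] V) (lact : A →ₗ[k] V →ₗ[k] V) (ract : V →ₗ[k] A →ₗ[k] V)
    (R₀ : Submodule k V) (Δ : V →ₗ[k] V ⊗[k] V) (ε : V →ₗ[k] A) : Prop :=
  -- (V,χ) is an (A,α)-Hom-bimodule
  (∀ a b v, Submodule.Quotient.mk (p := R₀) (lact (mul a b) (χ v))
      = Submodule.Quotient.mk (p := R₀) (lact (α a) (lact b v))) ∧
  (∀ v, Submodule.Quotient.mk (p := R₀) (lact one v) = Submodule.Quotient.mk (p := R₀) (χ v)) ∧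
  (∀ v a b, Submodule.Quotient.mk (p := R₀) (ract (χ v) (mul a b))
      = Submodule.Quotient.mk (p := R₀) (ract (ract v a) (α b))) ∧
  (∀ v, Submodule.Quotient.mk (p := R₀) (ract v one) = Submodule.Quotient.mk (p := R₀) (χ v)) ∧
  (∀ a v b, Submodule.Quotient.mk (p := R₀) (ract (lact a v) (α b))
      = Submodule.Quotient.mk (p := R₀) (lact (α a) (ract v b))) ∧
  (∀ a v, Submodule.Quotient.mk (p := R₀) (χ (lact a v))
      = Submodule.Quotient.mk (p := R₀) (lact (α a) (χ v))) ∧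
  (∀ v a, Submodule.Quotient.mk (p := R₀) (χ (ract v a))
      = Submodule.Quotient.mk (p := R₀) (ract (χ v) (α a))) ∧
  (∀ r ∈ R₀, χ r ∈ R₀) ∧
  -- Δ and ε are well defined on the quotient by R₀
  (∀ r ∈ R₀, Submodule.Quotient.mk (p := corRel R₀ χ lact ract) (Δ r) = 0) ∧
  (∀ r ∈ R₀, ε r = 0) ∧
  -- A-bilinearity of Δ
  (∀ a v, Submodule.Quotient.mk (p := corRel R₀ χ lact ract) (Δ (lact a v))
      = Submodule.Quotient.mk (p := corRel R₀ χ lact ract) (lact2 α χ lact a (Δ v))) ∧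
  (∀ v a, Submodule.Quotient.mk (p := corRel R₀ χ lact ract) (Δ (ract v a))
      = Submodule.Quotient.mk (p := corRel R₀ χ lact ract) (ract2 α χ ract a (Δ v))) ∧
  -- A-bilinearity of ε
  (∀ a v, ε (lact a v) = mul a (ε v)) ∧
  (∀ v a, ε (ract v a) = mul (ε v) a) ∧
  -- Hom-coassociativity: χ⁻¹(c₁) ⊗ Δ(c₂) = c₁₁ ⊗ (c₁₂ ⊗ χ⁻¹(c₂))
  (∀ v, Submodule.Quotient.mk (p := corRel3 R₀ α χ lact ract)
        (TensorProduct.map χ.symm.toLinearMap Δ (Δ v))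
      = Submodule.Quotient.mk (p := corRel3 R₀ α χ lact ract)
        (TensorProduct.assoc k V V V (TensorProduct.map Δ χ.symm.toLinearMap (Δ v)))) ∧
  -- counity: ε(c₁)c₂ = c = c₁ε(c₂)
  (∀ v, Submodule.Quotient.mk (p := R₀) (TensorProduct.lift (lact ∘ₗ ε) (Δ v))
      = Submodule.Quotient.mk (p := R₀) v) ∧
  (∀ v, Submodule.Quotient.mk (p := R₀) (TensorProduct.lift (ract.compl₂ ε) (Δ v))
      = Submodule.Quotient.mk (p := R₀) v) ∧
  -- compatibility with the twisting maps
  (∀ v, Submodule.Quotient.mk (p := corRel R₀ χ lact ract) (Δ (χ v))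
      = Submodule.Quotient.mk (p := corRel R₀ χ lact ract)
        (TensorProduct.map χ.toLinearMap χ.toLinearMap (Δ v))) ∧
  (∀ v, ε (χ v) = α (ε v))

end HomPaper

namespace HomPaper

variable {k A B C M : Type*} [CommRing k]
variable [AddCommGroup A] [Module k A] [AddCommGroup B] [Module k B]
variable [AddCommGroup C] [Module k C] [AddCommGroup M] [Module k M]

/-- Monoidal Hom-bialgebra axioms. -/
def IsHomBialgebra (β : B ≃ₗ[k] B) (mul : B →ₗ[k] B →ₗ[k] B) (one : B)
    (Δ : B →ₗ[k] B ⊗[k] B) (ε : B →ₗ[k] k) : Prop :=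
  IsHomAlgebra β mul one ∧ IsHomCoalgebra β Δ ε ∧
  (∀ b b', Δ (mul b b')
      = (TensorProduct.map (TensorProduct.lift mul) (TensorProduct.lift mul))
          (TensorProduct.tensorTensorTensorComm k B B B B (Δ b ⊗ₜ Δ b'))) ∧
  Δ one = one ⊗ₜ one ∧
  (∀ b b', ε (mul b b') = ε b * ε b') ∧ ε one = 1

/-- `(A,α)` is a right `(B,β)`-Hom-comodule algebra with coaction `ρ`. -/
def IsHomComoduleAlgebra (β : B ≃ₗ[k] B) (mulB : B →ₗ[k] B →ₗ[k] B)
    (ΔB : B →ₗ[k] B ⊗[k] B) (εB : B →ₗ[k] k)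
    (α : A ≃ₗ[k] A) (mulA : A →ₗ[k] A →ₗ[k] A) (oneA : A) (oneB : B)
    (ρ : A →ₗ[k] A ⊗[k] B) : Prop :=
  -- Hom-comodule axioms
  (∀ a, TensorProduct.map α.symm.toLinearMap ΔB (ρ a)
      = TensorProduct.assoc k A B B (TensorProduct.map ρ β.symm.toLinearMap (ρ a))) ∧
  (∀ a, TensorProduct.rid k A (TensorProduct.map LinearMap.id εB (ρ a)) = α.symm a) ∧
  (∀ a, ρ (α a) = TensorProduct.map α.toLinearMap β.toLinearMap (ρ a)) ∧
  -- ρ is a morphism of Hom-algebras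
  (∀ a a', ρ (mulA a a')
      = (TensorProduct.map (TensorProduct.lift mulA) (TensorProduct.lift mulB))
          (TensorProduct.tensorTensorTensorComm k A B A B (ρ a ⊗ₜ ρ a'))) ∧
  ρ oneA = oneA ⊗ₜ oneB

/-- `(C,γ)` is a right `(B,β)`-Hom-module coalgebra with action `act`. -/
def IsHomModuleCoalgebra (β : B ≃ₗ[k] B) (mulB : B →ₗ[k] B →ₗ[k] B) (oneB : B)
    (ΔB : B →ₗ[k] B ⊗[k] B) (εB : B →ₗ[k] k)
    (γ : C ≃ₗ[k] C) (ΔC : C →ₗ[k] C ⊗[k] C) (εC : C →ₗ[k] k)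
    (act : C →ₗ[k] B →ₗ[k] C) : Prop :=
  -- Hom-module axioms
  (∀ c b b', act (γ c) (mulB b b') = act (act c b) (β b')) ∧
  (∀ c, act c oneB = γ c) ∧
  (∀ c b, γ (act c b) = act (γ c) (β b)) ∧
  -- the action is a morphism of Hom-coalgebras
  (∀ c b, ΔC (act c b)
      = (TensorProduct.map (TensorProduct.lift act) (TensorProduct.lift act))
          (TensorProduct.tensorTensorTensorComm k C C B B (ΔC c ⊗ₜ ΔB b))) ∧
  (∀ c b, εC (act c b) = εC c * εB b)

/-- The entwining map of a Hom-Doi-Koppinen datum: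
`ψ(c⊗a) = α(a₍₀₎) ⊗ γ⁻¹(c)·a₍₁₎`. -/
noncomputable def dkEntwining (α : A ≃ₗ[k] A) (γ : C ≃ₗ[k] C)
    (ρA : A →ₗ[k] A ⊗[k] B) (actC : C →ₗ[k] B →ₗ[k] C) :
    C ⊗[k] A →ₗ[k] A ⊗[k] C :=
  (TensorProduct.map α.toLinearMap
      ((TensorProduct.lift actC) ∘ₗ (TensorProduct.map γ.symm.toLinearMap LinearMap.id))) ∘ₗ
    (TensorProduct.leftComm k C A B).toLinearMap ∘ₗ
      (TensorProduct.map LinearMap.id ρA)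

/-- For the Hom-entwining structure associated to a Hom-Doi-Koppinen
datum `[(A,α),(B,β),(C,γ)]`, with `ψ(c⊗a) = α(a₍₀₎) ⊗ γ⁻¹(c)a₍₁₎`, a right
`(A,α)`-Hom-module and right `(C,γ)`-Hom-comodule `(M,μ)` is an entwined Hom-module
(i.e. `ρ^M(ma) = m₍₀₎α⁻¹(a)_κ ⊗ γ(m₍₁₎^κ)`) if and only if
`ρ^M(ma) = m₍₀₎a₍₀₎ ⊗ m₍₁₎a₍₁₎` for all `m ∈ M`, `a ∈ A`. -/
theorem doiKoppinen_entwined_iff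
    (β : B ≃ₗ[k] B) (mulB : B →ₗ[k] B →ₗ[k] B) (oneB : B)
    (ΔB : B →ₗ[k] B ⊗[k] B) (εB : B →ₗ[k] k)
    (hB : IsHomBialgebra β mulB oneB ΔB εB)
    (α : A ≃ₗ[k] A) (mulA : A →ₗ[k] A →ₗ[k] A) (oneA : A) (ρA : A →ₗ[k] A ⊗[k] B)
    (hAalg : IsHomAlgebra α mulA oneA)
    (hA : IsHomComoduleAlgebra β mulB ΔB εB α mulA oneA oneB ρA)
    (γ : C ≃ₗ[k] C) (ΔC : C →ₗ[k] C ⊗[k] C) (εC : C →ₗ[k] k)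
    (actC : C →ₗ[k] B →ₗ[k] C)
    (hCco : IsHomCoalgebra γ ΔC εC)
    (hC : IsHomModuleCoalgebra β mulB oneB ΔB εB γ ΔC εC actC)
    (μ : M ≃ₗ[k] M) (actM : M →ₗ[k] A →ₗ[k] M) (ρM : M →ₗ[k] M ⊗[k] C)
    -- (M,μ) is a right (A,α)-Hom-module
    (hact1 : ∀ m a b, actM (μ m) (mulA a b) = actM (actM m a) (α b))
    (hact2 : ∀ m, actM m oneA = μ m)
    (hact3 : ∀ m a, μ (actM m a) = actM (μ m) (α a))
    -- (M,μ) is a right (C,γ)-Hom-comodule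
    (hco1 : ∀ m, TensorProduct.map μ.symm.toLinearMap ΔC (ρM m)
        = TensorProduct.assoc k M C C (TensorProduct.map ρM γ.symm.toLinearMap (ρM m)))
    (hco2 : ∀ m, TensorProduct.rid k M (TensorProduct.map LinearMap.id εC (ρM m)) = μ.symm m)
    (hco3 : ∀ m, ρM (μ m) = TensorProduct.map μ.toLinearMap γ.toLinearMap (ρM m)) :
    -- entwined Hom-module condition for ψ = dkEntwining …
    (∀ m a, ρM (actM m a)
        = TensorProduct.map (TensorProduct.lift actM) γ.toLinearMap
            ((TensorProduct.assoc k M A C).symm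
              (TensorProduct.map LinearMap.id (dkEntwining α γ ρA actC)
                (TensorProduct.assoc k M C A (ρM m ⊗ₜ α.symm a)))))
    ↔
    -- Doi-Koppinen Hom-Hopf module condition: ρ^M(ma) = m₍₀₎a₍₀₎ ⊗ m₍₁₎a₍₁₎
    (∀ m a, ρM (actM m a)
        = (TensorProduct.map (TensorProduct.lift actM) (TensorProduct.lift actC))
            (TensorProduct.tensorTensorTensorComm k M C A B (ρM m ⊗ₜ ρA a))) := by
  have hmor := hA.2.2.1
  have hγact := hC.2.2.1
  have key : ∀ m a, TensorProduct.map (TensorProduct.lift actM) γ.toLinearMap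
            ((TensorProduct.assoc k M A C).symm
              (TensorProduct.map LinearMap.id (dkEntwining α γ ρA actC)
                (TensorProduct.assoc k M C A (ρM m ⊗ₜ α.symm a))))
      = (TensorProduct.map (TensorProduct.lift actM) (TensorProduct.lift actC))
            (TensorProduct.tensorTensorTensorComm k M C A B (ρM m ⊗ₜ ρA a)) := by
    intro m a
    have hρ : ρA (α.symm a)
        = TensorProduct.map α.symm.toLinearMap β.symm.toLinearMap (ρA a) := by
      have h1 := hmor (α.symm a)
      rw [α.apply_symm_apply] at h1
      rw [h1, ← LinearMap.comp_apply, ← TensorProduct.map_comp]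
      have e1 : α.symm.toLinearMap ∘ₗ α.toLinearMap = LinearMap.id := by
        ext x; simp
      have e2 : β.symm.toLinearMap ∘ₗ β.toLinearMap = LinearMap.id := by
        ext x; simp
      rw [e1, e2, TensorProduct.map_id, LinearMap.id_apply]
    obtain ⟨t, ht⟩ : ∃ t, ρM m = t := ⟨_, rfl⟩
    rw [ht]; clear ht
    induction t using TensorProduct.induction_on with
    | zero => simp
    | add x y hx hy =>
        simp only [TensorProduct.add_tmul, map_add, hx, hy]
    | tmul m₀ m₁ =>
        simp only [TensorProduct.assoc_tmul, TensorProduct.map_tmul, LinearMap.id_apply,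
          dkEntwining, LinearMap.comp_apply, LinearEquiv.coe_coe, hρ]
        obtain ⟨s, hs⟩ : ∃ s, ρA a = s := ⟨_, rfl⟩
        rw [hs]; clear hs
        induction s using TensorProduct.induction_on with
        | zero => simp
        | add x y hx hy =>
            simp only [map_add, TensorProduct.tmul_add, hx, hy]
        | tmul a₀ a₁ =>
            simp only [TensorProduct.map_tmul, TensorProduct.leftComm_tmul,
              TensorProduct.assoc_symm_tmul, TensorProduct.lift.tmul,
              TensorProduct.tensorTensorTensorComm_tmul, LinearMap.id_apply,
              LinearEquiv.coe_coe, LinearEquiv.apply_symm_apply, LinearMap.comp_apply]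
            rw [hγact, γ.apply_symm_apply, β.apply_symm_apply]
  constructor
  · intro h m a; rw [h, key]
  · intro h m a; rw [h, key]

end HomPaper
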